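/- arXiv:2306.04623 — 5 statements merged into one kernel-verified Lean document; each statement's English description precedes it below -/
import Mathlib

section
/- Let r be a square root on a pseudo MV-algebra M = Γ(G,u). Then for each x ∈ M there exists a unique element R(x) ∈ M with R(x) ≤ r(0)⁻ such that R(x) ⊕ r(0) = r(x); moreover R(x) = r(x~)⁻ = r(x⁻)~. -/
/-! Conjugation by `u` is an automorphism of `G` fixing `u`, so by (Sq1) and (Sq2) it commutes
with `r`; in particular `r 0` commutes with `u`. Since `r 0 ≤ r x`, the truncations in (Sq3)
vanish: `r x~ = r 0 + (r x)~` and `r x⁻ = (r x)⁻ + r 0`. Applying the first formula twice computes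
`r x~~ = r (-u + x + u)`, and comparing with the conjugation formula shows that `r 0` commutes
with `r x`. Hence `r x - r 0` equals both `r(x~)⁻` and `r(x⁻)~`, and it is the only solution
because `⊕` is plain addition below `r(0)⁻`. -/

section Core

variable {G : Type} [Lattice G] [AddGroup G]

/-- `u` is a strong unit of the ℓ-group `G`. -/
def IsStrongUnit (u : G) : Prop :=
  0 ≤ u ∧ ∀ g : G, ∃ n : ℕ, 1 ≤ n ∧ g ≤ n • u

/-- Truncated addition `x ⊕ y = (x + y) ⊓ u` of the pseudo MV-algebra `Γ(G,u)`. -/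
def oplus (u x y : G) : G := (x + y) ⊓ u

/-- Left negation `x⁻ = u - x`. -/
def negl (u x : G) : G := u - x

/-- Right negation `x~ = -x + u`. -/
def negr (u x : G) : G := -x + u

/-- `x ⊙ y = (x - u + y) ⊔ 0`. -/
def odot (u x y : G) : G := (x - u + y) ⊔ 0

/-- `r` is a square root on the pseudo MV-algebra `M = Γ(G,u)`:
it maps `M` to `M` and satisfies (Sq1), (Sq2), (Sq3). -/
def IsSquareRoot (u : G) (r : G → G) : Prop :=
  (∀ x, 0 ≤ x → x ≤ u → 0 ≤ r x ∧ r x ≤ u) ∧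
  (∀ x, 0 ≤ x → x ≤ u → odot u (r x) (r x) = x) ∧
  (∀ x y, 0 ≤ x → x ≤ u → 0 ≤ y → y ≤ u → odot u y y ≤ x → y ≤ r x) ∧
  (∀ x, 0 ≤ x → x ≤ u → r (negl u x) = oplus u (negl u (r x)) (r 0)) ∧
  (∀ x, 0 ≤ x → x ≤ u → r (negr u x) = oplus u (r 0) (negr u (r x)))

/-- `r` is strict: `r 0 = r 0⁻`. -/
def IsStrict (u : G) (r : G → G) : Prop := r 0 = negl u (r 0)

end Core

/-- An additive structure is two-divisible if every element is `h + h` for some `h`. -/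
def TwoDivisible (A : Type) [Add A] : Prop := ∀ g : A, ∃ h : A, h + h = g

theorem negr_negr {G : Type} [AddGroup G] (u x : G) : negr u (negr u x) = -u + x + u := by
  simp [negr, add_assoc]

section PseudoMV

variable {G : Type} [Lattice G] [AddGroup G] [AddLeftMono G] [AddRightMono G]

omit [AddLeftMono G] in
theorem oplus_eq_add_of_le_negl {u a b : G} (h : a ≤ negl u b) : oplus u a b = a + b :=
  inf_eq_left.mpr (le_sub_iff_add_le.mp h)

omit [AddLeftMono G] in
theorem eq_sub_of_oplus_eq {u a b c : G} (h : a ≤ negl u b) (hc : oplus u a b = c) : a = c - b :=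
  eq_sub_of_add_eq ((oplus_eq_add_of_le_negl h).symm.trans hc)

omit [AddRightMono G] in
theorem negr_nonneg {u x : G} (hxu : x ≤ u) : 0 ≤ negr u x :=
  le_neg_add_iff_add_le.mpr (by simpa using hxu)

theorem negr_le {u x : G} (hx0 : 0 ≤ x) : negr u x ≤ u :=
  add_le_iff_nonpos_left.mpr (neg_nonpos.mpr hx0)

theorem odot_conj {u g : G} (hg : -g + u + g = u) (y z : G) :
    odot u (-g + y + g) (-g + z + g) = -g + odot u y z + g := by
  conv_lhs => rw [odot, ← hg]
  rw [odot, add_sup, sup_add]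
  simp [sub_eq_add_neg, add_assoc]

theorem conj_le_conj_iff {g y z : G} : -g + y + g ≤ -g + z + g ↔ y ≤ z := by
  simp

theorem conj_nonneg_iff {g y : G} : 0 ≤ -g + y + g ↔ 0 ≤ y := by
  simpa using conj_le_conj_iff (g := g) (y := 0) (z := y)

namespace IsSquareRoot

variable {u : G} {r : G → G}

theorem conj_le_apply_conj (hr : IsSquareRoot u r) {g : G} (hg : -g + u + g = u) {x : G}
    (hx0 : 0 ≤ x) (hxu : x ≤ u) : -g + r x + g ≤ r (-g + x + g) := by
  obtain ⟨hrx0, hrxu⟩ := hr.1 x hx0 hxu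
  refine hr.2.2.1 _ _ (conj_nonneg_iff.mpr hx0) (conj_le_conj_iff.mpr hxu |>.trans_eq hg)
    (conj_nonneg_iff.mpr hrx0) (conj_le_conj_iff.mpr hrxu |>.trans_eq hg) ?_
  rw [odot_conj hg, hr.2.1 x hx0 hxu]

theorem apply_conj (hr : IsSquareRoot u r) {g : G} (hg : -g + u + g = u) {x : G}
    (hx0 : 0 ≤ x) (hxu : x ≤ u) : r (-g + x + g) = -g + r x + g := by
  refine le_antisymm ?_ (hr.conj_le_apply_conj hg hx0 hxu)
  have hg' : - -g + u + -g = u := by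
    conv_lhs => rw [← hg]
    simp [add_assoc]
  have h := hr.conj_le_apply_conj hg' (conj_nonneg_iff.mpr hx0)
    (conj_le_conj_iff.mpr hxu |>.trans_eq hg)
  rw [← conj_le_conj_iff (g := -g)]
  simpa [add_assoc] using h

omit [AddLeftMono G] [AddRightMono G] in
theorem apply_zero_le (hr : IsSquareRoot u r) {x : G} (hx0 : 0 ≤ x) (hxu : x ≤ u) :
    r 0 ≤ r x := by
  have hu0 : 0 ≤ u := hx0.trans hxu
  obtain ⟨ha0, hau⟩ := hr.1 0 le_rfl hu0
  exact hr.2.2.1 x (r 0) hx0 hxu ha0 hau (by rw [hr.2.1 0 le_rfl hu0]; exact hx0)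

theorem addCommute_apply_zero_unit (hr : IsSquareRoot u r) (hu0 : 0 ≤ u) :
    AddCommute (r 0) u := by
  have h := hr.apply_conj (g := u) (by simp) le_rfl hu0
  simp only [add_zero, neg_add_cancel] at h
  rw [add_assoc, eq_neg_add_iff_add_eq] at h
  exact h.symm

omit [AddLeftMono G] in
theorem apply_negr (hr : IsSquareRoot u r) {x : G} (hx0 : 0 ≤ x) (hxu : x ≤ u) :
    r (negr u x) = r 0 + negr u (r x) := by
  rw [hr.2.2.2.2 x hx0 hxu, oplus_eq_add_of_le_negl]
  simpa [negl, negr] using hr.apply_zero_le hx0 hxu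

theorem apply_negl (hr : IsSquareRoot u r) {x : G} (hx0 : 0 ≤ x) (hxu : x ≤ u) :
    r (negl u x) = negl u (r x) + r 0 := by
  rw [hr.2.2.2.1 x hx0 hxu, oplus_eq_add_of_le_negl]
  exact sub_le_sub_left (hr.apply_zero_le hx0 hxu) u

theorem addCommute_apply_zero (hr : IsSquareRoot u r) {x : G} (hx0 : 0 ≤ x) (hxu : x ≤ u) :
    AddCommute (r 0) (r x) := by
  have hnegr_negr := hr.apply_conj (g := u) (by simp) hx0 hxu
  rw [← negr_negr, hr.apply_negr (negr_nonneg hxu) (negr_le hx0), hr.apply_negr hx0 hxu]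
    at hnegr_negr
  have hcu : r 0 + -u = -u + r 0 := (hr.addCommute_apply_zero_unit (hx0.trans hxu)).neg_right.eq
  have hconj : -u + (r 0 + r x + -r 0) + u = -u + r x + u := by
    rw [← hnegr_negr]
    simp only [negr, neg_add_rev, neg_neg, ← add_assoc, hcu]
  rw [add_left_inj, add_right_inj] at hconj
  exact add_neg_eq_iff_eq_add.mp hconj

omit [AddLeftMono G] in
theorem negl_apply_negr (hr : IsSquareRoot u r) {x : G} (hx0 : 0 ≤ x) (hxu : x ≤ u) :
    negl u (r (negr u x)) = r x - r 0 := by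
  rw [hr.apply_negr hx0 hxu]
  simp [negl, negr, sub_eq_add_neg, add_assoc]

theorem negr_apply_negl (hr : IsSquareRoot u r) {x : G} (hx0 : 0 ≤ x) (hxu : x ≤ u) :
    negr u (r (negl u x)) = r x - r 0 := by
  rw [hr.apply_negl hx0 hxu, sub_eq_add_neg, ← (hr.addCommute_apply_zero hx0 hxu).neg_left.eq]
  simp [negl, negr, sub_eq_add_neg, add_assoc]

theorem sub_apply_zero_spec (hr : IsSquareRoot u r) {x : G} (hx0 : 0 ≤ x) (hxu : x ≤ u) :
    (0 ≤ r x - r 0 ∧ r x - r 0 ≤ u) ∧ r x - r 0 ≤ negl u (r 0) ∧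
      oplus u (r x - r 0) (r 0) = r x := by
  obtain ⟨ha0, -⟩ := hr.1 0 le_rfl (hx0.trans hxu)
  obtain ⟨-, hrxu⟩ := hr.1 x hx0 hxu
  have hle : r x - r 0 ≤ negl u (r 0) := sub_le_sub_right hrxu _
  refine ⟨⟨sub_nonneg.mpr (hr.apply_zero_le hx0 hxu), hle.trans (sub_le_self u ha0)⟩, hle, ?_⟩
  rw [oplus_eq_add_of_le_negl hle, sub_add_cancel]

end IsSquareRoot

end PseudoMV

theorem stmt_0_general {G : Type} [Lattice G] [AddGroup G]
    [CovariantClass G G (· + ·) (· ≤ ·)]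
    [CovariantClass G G (Function.swap (· + ·)) (· ≤ ·)]
    (u : G) (r : G → G) (hr : IsSquareRoot u r)
    (x : G) (hx0 : 0 ≤ x) (hxu : x ≤ u) :
    (∃! R : G, (0 ≤ R ∧ R ≤ u) ∧ R ≤ negl u (r 0) ∧ oplus u R (r 0) = r x) ∧
    (0 ≤ negl u (r (negr u x)) ∧ negl u (r (negr u x)) ≤ u) ∧
    negl u (r (negr u x)) ≤ negl u (r 0) ∧
    oplus u (negl u (r (negr u x))) (r 0) = r x ∧
    negl u (r (negr u x)) = negr u (r (negl u x)) := by
  obtain ⟨hmem, hle, hoplus⟩ := hr.sub_apply_zero_spec hx0 hxu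
  rw [hr.negl_apply_negr hx0 hxu, hr.negr_apply_negl hx0 hxu]
  exact ⟨⟨_, ⟨hmem, hle, hoplus⟩, fun R hR => eq_sub_of_oplus_eq hR.2.1 hR.2.2⟩,
    hmem, hle, hoplus, rfl⟩

/-- For each `x ∈ M` there is a unique `R(x) ∈ M` with `R(x) ≤ r(0)⁻` and
`R(x) ⊕ r(0) = r(x)`; moreover `R(x) = r(x~)⁻ = r(x⁻)~`. -/
theorem stmt_0 {G : Type} [Lattice G] [AddGroup G]
    [CovariantClass G G (· + ·) (· ≤ ·)]
    [CovariantClass G G (Function.swap (· + ·)) (· ≤ ·)]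
    (u : G) (hu : IsStrongUnit u) (r : G → G) (hr : IsSquareRoot u r)
    (x : G) (hx0 : 0 ≤ x) (hxu : x ≤ u) :
    (∃! R : G, (0 ≤ R ∧ R ≤ u) ∧ R ≤ negl u (r 0) ∧ oplus u R (r 0) = r x) ∧
    (0 ≤ negl u (r (negr u x)) ∧ negl u (r (negr u x)) ≤ u) ∧
    negl u (r (negr u x)) ≤ negl u (r 0) ∧
    oplus u (negl u (r (negr u x))) (r 0) = r x ∧
    negl u (r (negr u x)) = negr u (r (negl u x)) :=
  stmt_0_general u r hr x hx0 hxu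
end

section
/- Let r be a square root on a pseudo MV-algebra M = Γ(G,u). Then for each x ∈ M, r(x) is the maximum of the set {y ∧ (y → x) : y ∈ M} and also the maximum of the set {y ∧ (y ⇝ x) : y ∈ M}, where y → x = y⁻ ⊕ x and y ⇝ x = x ⊕ y~. -/
/-!
Sq1 says `r x ⊙ r x = x`, which in `G` rearranges to `r x ≤ r x → x` and `r x ≤ r x ⇝ x`,
so `r x` itself occurs in both sets. Conversely, for `z = y ∧ (y → x)` we have `z ≤ y`, hence
`z ≤ y → x ≤ z → x`, which rearranges back to `z ⊙ z ≤ x`; Sq2 then gives `z ≤ r x`.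
-/

section Rearrange

variable {G : Type} [Lattice G] [AddGroup G] {u x y : G}

theorem odot_self_le_iff_le_negl_add [AddLeftMono G] (hx : 0 ≤ x) :
    odot u y y ≤ x ↔ y ≤ negl u y + x := by
  have hcancel : negl u y + (y - u + y) = y := by
    rw [negl, ← add_assoc, sub_add_sub_cancel, sub_self, zero_add]
  rw [odot, sup_le_iff, and_iff_left hx, ← add_le_add_iff_left (negl u y), hcancel]

theorem odot_self_le_iff_le_add_negr [AddRightMono G] (hx : 0 ≤ x) :
    odot u y y ≤ x ↔ y ≤ x + negr u y := by
  have hcancel : y - u + y + negr u y = y := by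
    rw [negr, add_assoc (y - u), ← add_assoc y, add_neg_cancel, zero_add, sub_add_cancel]
  rw [odot, sup_le_iff, and_iff_left hx, ← add_le_add_iff_right (negr u y), hcancel]

theorem negl_nonneg [AddRightMono G] (hyu : y ≤ u) : 0 ≤ negl u y :=
  sub_nonneg_of_le hyu

theorem negr_nonneg_s2 [AddLeftMono G] (hyu : y ≤ u) : 0 ≤ negr u y :=
  le_neg_add_iff_le.2 hyu

theorem negl_anti [AddLeftMono G] [AddRightMono G] (hxy : x ≤ y) : negl u y ≤ negl u x :=
  sub_le_sub_left hxy u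

theorem negr_anti [AddLeftMono G] [AddRightMono G] (hxy : x ≤ y) : negr u y ≤ negr u x :=
  add_le_add_left (neg_le_neg_iff.2 hxy) u

end Rearrange

theorem IsGreatest.of_inf_image {α : Type*} [Lattice α] {lo hi a : α} {f : α → α}
    (hlo : lo ≤ a) (hhi : a ≤ hi) (haf : a ≤ f a)
    (hbound : ∀ y, lo ≤ y → y ≤ hi → y ⊓ f y ≤ a) :
    IsGreatest {z | ∃ y, lo ≤ y ∧ y ≤ hi ∧ z = y ⊓ f y} a :=
  ⟨⟨a, hlo, hhi, (inf_eq_left.2 haf).symm⟩, by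
    rintro _ ⟨y, hy0, hyu, rfl⟩
    exact hbound y hy0 hyu⟩

section SquareRoot

variable {G : Type} [Lattice G] [AddGroup G] {u : G} {r : G → G} {x y : G}

theorem IsSquareRoot.le_negl_oplus [AddLeftMono G] (hr : IsSquareRoot u r)
    (hx0 : 0 ≤ x) (hxu : x ≤ u) :
    r x ≤ oplus u (negl u (r x)) x :=
  le_inf ((odot_self_le_iff_le_negl_add hx0).1 (hr.2.1 x hx0 hxu).le)
    (hr.1 x hx0 hxu).2

theorem IsSquareRoot.le_oplus_negr [AddRightMono G] (hr : IsSquareRoot u r)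
    (hx0 : 0 ≤ x) (hxu : x ≤ u) :
    r x ≤ oplus u x (negr u (r x)) :=
  le_inf ((odot_self_le_iff_le_add_negr hx0).1 (hr.2.1 x hx0 hxu).le)
    (hr.1 x hx0 hxu).2

theorem IsSquareRoot.inf_negl_oplus_le [AddLeftMono G] [AddRightMono G] (hr : IsSquareRoot u r)
    (hx0 : 0 ≤ x) (hxu : x ≤ u) (hy0 : 0 ≤ y) (hyu : y ≤ u) :
    y ⊓ oplus u (negl u y) x ≤ r x := by
  set z := y ⊓ oplus u (negl u y) x
  have hzy : z ≤ y := inf_le_left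
  have hz0 : 0 ≤ z :=
    le_inf hy0 (le_inf (add_nonneg (negl_nonneg hyu) hx0) (hx0.trans hxu))
  refine hr.2.2.1 x z hx0 hxu hz0 (hzy.trans hyu) ((odot_self_le_iff_le_negl_add hx0).2 ?_)
  calc z ≤ negl u y + x := inf_le_right.trans inf_le_left
    _ ≤ negl u z + x := add_le_add_left (negl_anti hzy) x

theorem IsSquareRoot.inf_oplus_negr_le [AddLeftMono G] [AddRightMono G] (hr : IsSquareRoot u r)
    (hx0 : 0 ≤ x) (hxu : x ≤ u) (hy0 : 0 ≤ y) (hyu : y ≤ u) :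
    y ⊓ oplus u x (negr u y) ≤ r x := by
  set z := y ⊓ oplus u x (negr u y)
  have hzy : z ≤ y := inf_le_left
  have hz0 : 0 ≤ z :=
    le_inf hy0 (le_inf (add_nonneg hx0 (negr_nonneg_s2 hyu)) (hx0.trans hxu))
  refine hr.2.2.1 x z hx0 hxu hz0 (hzy.trans hyu) ((odot_self_le_iff_le_add_negr hx0).2 ?_)
  calc z ≤ x + negr u y := inf_le_right.trans inf_le_left
    _ ≤ x + negr u z := add_le_add_right (negr_anti hzy) x

end SquareRoot

theorem stmt_2_general {G : Type} [Lattice G] [AddGroup G]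
    [CovariantClass G G (· + ·) (· ≤ ·)]
    [CovariantClass G G (Function.swap (· + ·)) (· ≤ ·)]
    (u : G) (r : G → G) (hr : IsSquareRoot u r)
    (x : G) (hx0 : 0 ≤ x) (hxu : x ≤ u) :
    IsGreatest {z : G | ∃ y, 0 ≤ y ∧ y ≤ u ∧ z = y ⊓ oplus u (negl u y) x} (r x) ∧
    IsGreatest {z : G | ∃ y, 0 ≤ y ∧ y ≤ u ∧ z = y ⊓ oplus u x (negr u y)} (r x) := by
  obtain ⟨hr0, hru⟩ := hr.1 x hx0 hxu
  exact ⟨.of_inf_image hr0 hru (hr.le_negl_oplus hx0 hxu)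
      fun _ hy0 hyu => hr.inf_negl_oplus_le hx0 hxu hy0 hyu,
    .of_inf_image hr0 hru (hr.le_oplus_negr hx0 hxu)
      fun _ hy0 hyu => hr.inf_oplus_negr_le hx0 hxu hy0 hyu⟩

/-- `r(x)` is the maximum of `{y ⊓ (y → x) : y ∈ M}` and of
`{y ⊓ (y ⇝ x) : y ∈ M}`, where `y → x = y⁻ ⊕ x` and `y ⇝ x = x ⊕ y~`. -/
theorem stmt_2 {G : Type} [Lattice G] [AddGroup G]
    [CovariantClass G G (· + ·) (· ≤ ·)]
    [CovariantClass G G (Function.swap (· + ·)) (· ≤ ·)]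
    (u : G) (hu : IsStrongUnit u) (r : G → G) (hr : IsSquareRoot u r)
    (x : G) (hx0 : 0 ≤ x) (hxu : x ≤ u) :
    IsGreatest {z : G | ∃ y, 0 ≤ y ∧ y ≤ u ∧ z = y ⊓ oplus u (negl u y) x} (r x) ∧
    IsGreatest {z : G | ∃ y, 0 ≤ y ∧ y ≤ u ∧ z = y ⊓ oplus u x (negr u y)} (r x) :=
  stmt_2_general u r hr x hx0 hxu
end

section
/- Let M = Γ(G,u) be a representable pseudo MV-algebra with a strict square root. Then (G,u) can be embedded into a two-divisible unital lattice-ordered group: there exist a lattice-ordered group G₀ that is two-divisible, a strong unit u₀ of G₀, and an injective group homomorphism φ : G → G₀ preserving finite meets and joins with φ(u) = u₀. -/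
/-- A bundled linearly ordered (not necessarily abelian) group with a strong unit;
`Γ((K i).carrier, (K i).u)` is then a linearly ordered pseudo MV-algebra. -/
structure LinUnitalGroup : Type 1 where
  carrier : Type
  [grp : AddGroup carrier]
  [lin : LinearOrder carrier]
  covl : ∀ a b c : carrier, b ≤ c → a + b ≤ a + c
  covr : ∀ a b c : carrier, b ≤ c → b + a ≤ c + a
  u : carrier
  u_nonneg : 0 ≤ u
  strong : ∀ g : carrier, ∃ n : ℕ, 1 ≤ n ∧ g ≤ n • u

attribute [instance] LinUnitalGroup.grp LinUnitalGroup.lin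

/-- The pseudo MV-algebra `M = Γ(G,u)` is representable: there is a family of linearly
ordered pseudo MV-algebras `Γ((K i).carrier,(K i).u)` and an injective homomorphism
(preserving `⊕`, `⁻`, `~`, `0`, `1`) of `M` into their direct product which is
surjective in each coordinate. -/
def IsRepresentable {G : Type} [Lattice G] [AddGroup G] (u : G) : Prop :=
  ∃ (ι : Type) (K : ι → LinUnitalGroup) (f : G → ∀ i, (K i).carrier),
    (∀ x, 0 ≤ x → x ≤ u → ∀ i, 0 ≤ f x i ∧ f x i ≤ (K i).u) ∧
    (∀ i, f 0 i = 0) ∧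
    (∀ i, f u i = (K i).u) ∧
    (∀ x y, 0 ≤ x → x ≤ u → 0 ≤ y → y ≤ u → ∀ i,
      f (oplus u x y) i = min (f x i + f y i) (K i).u) ∧
    (∀ x, 0 ≤ x → x ≤ u → ∀ i, f (negl u x) i = (K i).u - f x i) ∧
    (∀ x, 0 ≤ x → x ≤ u → ∀ i, f (negr u x) i = -(f x i) + (K i).u) ∧
    (∀ x y, 0 ≤ x → x ≤ u → 0 ≤ y → y ≤ u → (∀ i, f x i = f y i) → x = y) ∧
    (∀ i, ∀ z : (K i).carrier, 0 ≤ z → z ≤ (K i).u →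
      ∃ x, 0 ≤ x ∧ x ≤ u ∧ f x i = z)

/-- A bundled (not necessarily abelian) lattice-ordered group with a strong unit. -/
structure UnitalLGroup : Type 1 where
  carrier : Type
  [grp : AddGroup carrier]
  [lat : Lattice carrier]
  covl : ∀ a b c : carrier, b ≤ c → a + b ≤ a + c
  covr : ∀ a b c : carrier, b ≤ c → b + a ≤ c + a
  u : carrier
  u_nonneg : 0 ≤ u
  strong : ∀ g : carrier, ∃ n : ℕ, 1 ≤ n ∧ g ≤ n • u

attribute [instance] UnitalLGroup.grp UnitalLGroup.lat

/-!
With a strict square root, `t = r 0` satisfies `t + t = u`, and the axioms (Sq1)–(Sq3) force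
every `x ∈ [0,u]` to be `(r x - t) + (r x - t)` and to commute with `t`; since `u` is a strong
unit, `t` and hence `u` are central. A positive `g` splits as `(g - u)⁺ + g ⊓ u`, where `(g - u)⁺`
is disjoint from `u - g ⊓ u ≥ u - r (g ⊓ u)`. Disjoint positive elements commute, so a half of
`(g - u)⁺` commutes with `u - r (g ⊓ u)`, hence with the half `r (g ⊓ u) - t` of `g ⊓ u`, and the
two halves add up to a half of `g`; halves of `g⁺` and `g⁻` are disjoint as well. Thus `G` itself
is two-divisible, and `(G,u)` embeds into itself.
-/

section LatticeOrderedGroup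

variable {G : Type*} [Lattice G] [AddGroup G] [AddLeftMono G]

theorem le_self_of_add_self_eq {h g : G} (h0 : 0 ≤ h) (hg : h + h = g) : h ≤ g :=
  hg ▸ le_add_of_nonneg_right h0

variable [AddRightMono G]

theorem add_neg_inf_add (a b : G) : a + (-(a ⊓ b) + b) = b ⊔ a := by
  rw [neg_inf, sup_add, add_sup, neg_add_cancel, add_zero, add_neg_cancel_left]

theorem addCommute_of_inf_eq_zero {a b : G} (h : a ⊓ b = 0) : AddCommute a b := by
  have hab := add_neg_inf_add a b
  have hba := add_neg_inf_add b a
  rw [h, neg_zero, zero_add] at hab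
  rw [inf_comm, h, neg_zero, zero_add] at hba
  change a + b = b + a
  rw [hab, hba, sup_comm]

theorem addCommute_of_le_of_inf_eq_zero {a b x y : G} (hx : 0 ≤ x) (hy : 0 ≤ y)
    (hxa : x ≤ a) (hyb : y ≤ b) (h : a ⊓ b = 0) : AddCommute x y :=
  addCommute_of_inf_eq_zero <|
    le_antisymm ((inf_le_inf hxa hyb).trans h.le) (le_inf hx hy)

theorem posPart_sub (a b : G) : (a - b)⁺ = a - a ⊓ b := by
  rw [posPart_def, sub_eq_add_neg, sub_eq_add_neg, neg_inf, add_sup, add_neg_cancel, sup_comm]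

theorem sub_inf_eq_negPart (a b : G) : b - a ⊓ b = (a - b)⁻ := by
  rw [← posPart_neg, neg_sub, posPart_sub, inf_comm]

end LatticeOrderedGroup

section StrongUnit

variable {G : Type} [Lattice G] [AddGroup G] [AddLeftMono G] [AddRightMono G] {u : G}

theorem IsStrongUnit.nonneg_induction (hu : IsStrongUnit u) {P : G → Prop} (zero : P 0)
    (add : ∀ a b, 0 ≤ a → 0 ≤ b → b ≤ u → a ⊓ (u - b) = 0 → P a → P (a + b))
    {g : G} (hg : 0 ≤ g) : P g := by
  obtain ⟨n, -, hgn⟩ := hu.2 g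
  induction n generalizing g with
  | zero => rwa [le_antisymm (zero_nsmul u ▸ hgn) hg]
  | succ n ih =>
    have hslice : (g - u)⁺ ≤ n • u :=
      sup_le (sub_le_iff_le_add.2 (succ_nsmul u n ▸ hgn)) (nsmul_nonneg hu.1 n)
    have hdisj : (g - u)⁺ ⊓ (u - g ⊓ u) = 0 := by
      rw [sub_inf_eq_negPart, posPart_inf_negPart_eq_zero]
    rw [← sub_add_cancel g (g ⊓ u), ← posPart_sub]
    exact add _ _ (posPart_nonneg _) (le_inf hg hu.1) inf_le_right hdisj
      (ih (posPart_nonneg _) hslice)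

theorem IsStrongUnit.mem_of_Icc_subset (hu : IsStrongUnit u) {S : AddSubgroup G}
    (hS : ∀ x, 0 ≤ x → x ≤ u → x ∈ S) (g : G) : g ∈ S := by
  have hpos : ∀ {g : G}, 0 ≤ g → g ∈ S := fun hg =>
    hu.nonneg_induction S.zero_mem
      (fun _ b _ hb hbu _ ha => S.add_mem ha (hS b hb hbu)) hg
  rw [← posPart_sub_negPart g]
  exact S.sub_mem (hpos (posPart_nonneg g)) (hpos (negPart_nonneg g))

end StrongUnit

theorem IsStrict.r_zero_add_r_zero {G : Type} [AddGroup G] {u : G} {r : G → G}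
    (hs : IsStrict u r) : r 0 + r 0 = u := by
  nth_rewrite 1 [hs]
  exact sub_add_cancel u (r 0)

namespace IsSquareRoot

variable {G : Type} [Lattice G] [AddGroup G] {u : G} {r : G → G} {x : G}

theorem nonneg (hr : IsSquareRoot u r) (hx0 : 0 ≤ x) (hxu : x ≤ u) : 0 ≤ r x :=
  (hr.1 x hx0 hxu).1

theorem le_unit (hr : IsSquareRoot u r) (hx0 : 0 ≤ x) (hxu : x ≤ u) : r x ≤ u :=
  (hr.1 x hx0 hxu).2

theorem r_zero_le (hr : IsSquareRoot u r) (hs : IsStrict u r) (hu0 : 0 ≤ u)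
    (hx0 : 0 ≤ x) (hxu : x ≤ u) : r 0 ≤ r x := by
  refine hr.2.2.1 x (r 0) hx0 hxu (hr.nonneg le_rfl hu0) (hr.le_unit le_rfl hu0) ?_
  rw [odot, ← hs.r_zero_add_r_zero, sub_eq_add_neg, neg_add_rev, add_neg_cancel_left,
    neg_add_cancel, sup_idem]
  exact hx0

theorem le_self [AddRightMono G] (hr : IsSquareRoot u r) (hx0 : 0 ≤ x) (hxu : x ≤ u) :
    x ≤ r x :=
  calc x = odot u (r x) (r x) := (hr.2.1 x hx0 hxu).symm
    _ ≤ r x := sup_le (add_le_of_nonpos_left (sub_nonpos.2 (hr.le_unit hx0 hxu)))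
      (hr.nonneg hx0 hxu)

theorem r_negl [AddLeftMono G] (hr : IsSquareRoot u r) (hs : IsStrict u r) (hu0 : 0 ≤ u)
    (hx0 : 0 ≤ x) (hxu : x ≤ u) : r (u - x) = u - r x + r 0 := by
  rw [← negl, hr.2.2.2.1 x hx0 hxu, oplus, negl, inf_eq_left]
  calc u - r x + r 0 ≤ u - r x + r x := add_le_add_right (hr.r_zero_le hs hu0 hx0 hxu) _
    _ = u := sub_add_cancel u (r x)

variable [AddLeftMono G] [AddRightMono G]

theorem r_sub_add_r (hr : IsSquareRoot u r) (hs : IsStrict u r) (hu0 : 0 ≤ u)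
    (hx0 : 0 ≤ x) (hxu : x ≤ u) : r x - u + r x = x := by
  have hle : u - r x ≤ r x := calc
    u - r x ≤ u - r 0 := sub_le_sub_left (hr.r_zero_le hs hu0 hx0 hxu) u
    _ = r 0 := hs.symm
    _ ≤ r x := hr.r_zero_le hs hu0 hx0 hxu
  have hsq := hr.2.1 x hx0 hxu
  rwa [odot, sup_eq_left.2 (neg_le_iff_add_nonneg'.1 (by rwa [neg_sub]))] at hsq

theorem neg_r_zero_add_add_self (hr : IsSquareRoot u r) (hs : IsStrict u r) (hu0 : 0 ≤ u)
    (hx0 : 0 ≤ x) (hxu : x ≤ u) : (-r 0 + r x) + (-r 0 + r x) = x := by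
  have e := hr.r_sub_add_r hs hu0 (sub_nonneg.2 hxu) (sub_le_self u hx0)
  rw [hr.r_negl hs hu0 hx0 hxu] at e
  have hu_add : u + ((-r x + r 0) + (-r x + r 0)) = u + -x := by
    rw [← sub_eq_add_neg u x, ← e]
    simp only [sub_eq_add_neg, add_assoc, neg_add_cancel_left]
  calc (-r 0 + r x) + (-r 0 + r x) = -((-r x + r 0) + (-r x + r 0)) := by
        simp only [neg_add_rev, neg_neg]
    _ = x := by rw [add_left_cancel hu_add, neg_neg]

theorem addCommute_r_zero_r (hr : IsSquareRoot u r) (hs : IsStrict u r) (hu0 : 0 ≤ u)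
    (hx0 : 0 ≤ x) (hxu : x ≤ u) : AddCommute (r 0) (r x) := by
  have e : (r x + -r 0) + (-r 0 + r x) = (-r 0 + r x) + (-r 0 + r x) := calc
    _ = r x - u + r x := by
      rw [← hs.r_zero_add_r_zero]
      simp only [sub_eq_add_neg, neg_add_rev, add_assoc]
    _ = x := hr.r_sub_add_r hs hu0 hx0 hxu
    _ = _ := (hr.neg_r_zero_add_add_self hs hu0 hx0 hxu).symm
  exact AddCommute.neg_left_iff.1 (add_right_cancel e).symm

theorem addCommute_r_zero_of_mem (hr : IsSquareRoot u r) (hs : IsStrict u r) (hu0 : 0 ≤ u)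
    (hx0 : 0 ≤ x) (hxu : x ≤ u) : AddCommute (r 0) x := by
  have hc : AddCommute (r 0) (-r 0 + r x) :=
    (AddCommute.refl _).neg_right.add_right (hr.addCommute_r_zero_r hs hu0 hx0 hxu)
  rw [← hr.neg_r_zero_add_add_self hs hu0 hx0 hxu]
  exact hc.add_right hc

theorem sub_r_zero_add_self (hr : IsSquareRoot u r) (hs : IsStrict u r) (hu0 : 0 ≤ u)
    (hx0 : 0 ≤ x) (hxu : x ≤ u) : (r x - r 0) + (r x - r 0) = x := by
  rw [sub_eq_add_neg, ← (hr.addCommute_r_zero_r hs hu0 hx0 hxu).neg_left.eq,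
    hr.neg_r_zero_add_add_self hs hu0 hx0 hxu]

theorem addCommute_r_zero (hu : IsStrongUnit u) (hr : IsSquareRoot u r) (hs : IsStrict u r)
    (g : G) : AddCommute (r 0) g := by
  have hg : g ∈ AddSubgroup.centralizer {r 0} := hu.mem_of_Icc_subset (fun _ hx0 hxu =>
    AddSubgroup.mem_centralizer_singleton_iff.2
      (hr.addCommute_r_zero_of_mem hs hu.1 hx0 hxu).eq.symm) g
  exact (AddSubgroup.mem_centralizer_singleton_iff.1 hg).symm

theorem exists_half_of_nonneg (hu : IsStrongUnit u) (hr : IsSquareRoot u r) (hs : IsStrict u r)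
    {g : G} (hg : 0 ≤ g) : ∃ h, 0 ≤ h ∧ h + h = g := by
  refine hu.nonneg_induction (P := fun g => ∃ h, 0 ≤ h ∧ h + h = g) ⟨0, le_rfl, add_zero 0⟩
    ?_ hg
  rintro _ b - hb0 hbu hdisj ⟨h, h0, rfl⟩
  have hcen := hr.addCommute_r_zero hu hs
  have hfar : AddCommute h (u - r b) :=
    addCommute_of_le_of_inf_eq_zero h0 (sub_nonneg.2 (hr.le_unit hb0 hbu))
      (le_self_of_add_self_eq h0 rfl) (sub_le_sub_left (hr.le_self hb0 hbu) u) hdisj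
  have hrb : AddCommute h (r b) := by
    have hu' : AddCommute h u := hs.r_zero_add_r_zero ▸ ((hcen h).add_left (hcen h)).symm
    simpa [sub_eq_add_neg, add_assoc] using hfar.neg_right.add_right hu'
  have hcomm : AddCommute (r b - r 0) h := by
    rw [sub_eq_add_neg]
    exact (hrb.add_right (hcen h).symm.neg_right).symm
  refine ⟨h + (r b - r 0), add_nonneg h0 (sub_nonneg.2 (hr.r_zero_le hs hu.1 hb0 hbu)), ?_⟩
  rw [hcomm.add_add_add_comm, hr.sub_r_zero_add_self hs hu.1 hb0 hbu]

theorem twoDivisible (hu : IsStrongUnit u) (hr : IsSquareRoot u r) (hs : IsStrict u r) :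
    TwoDivisible G := by
  intro g
  obtain ⟨p, hp0, hp⟩ := hr.exists_half_of_nonneg hu hs (posPart_nonneg g)
  obtain ⟨q, hq0, hq⟩ := hr.exists_half_of_nonneg hu hs (negPart_nonneg g)
  have hpq : AddCommute p q :=
    addCommute_of_le_of_inf_eq_zero hp0 hq0 (le_self_of_add_self_eq hp0 hp)
      (le_self_of_add_self_eq hq0 hq) (posPart_inf_negPart_eq_zero g)
  refine ⟨p - q, ?_⟩
  rw [sub_eq_add_neg, hpq.neg_right.symm.add_add_add_comm, ← neg_add_rev, hp, hq,
    ← sub_eq_add_neg, posPart_sub_negPart]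

end IsSquareRoot

def IsStrongUnit.toUnitalLGroup {G : Type} [Lattice G] [AddGroup G] [AddLeftMono G]
    [AddRightMono G] {u : G} (hu : IsStrongUnit u) : UnitalLGroup where
  carrier := G
  covl _ _ _ h := add_le_add_right h _
  covr _ _ _ h := add_le_add_left h _
  u := u
  u_nonneg := hu.1
  strong := hu.2

theorem stmt_5_general {G : Type} [Lattice G] [AddGroup G]
    [CovariantClass G G (· + ·) (· ≤ ·)]
    [CovariantClass G G (Function.swap (· + ·)) (· ≤ ·)]
    (u : G) (hu : IsStrongUnit u)
    (r : G → G) (hr : IsSquareRoot u r) (hs : IsStrict u r) :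
    ∃ (H : UnitalLGroup) (φ : G → H.carrier),
      Function.Injective φ ∧
      (∀ a b : G, φ (a + b) = φ a + φ b) ∧
      (∀ a b : G, φ (a ⊓ b) = φ a ⊓ φ b) ∧
      (∀ a b : G, φ (a ⊔ b) = φ a ⊔ φ b) ∧
      φ u = H.u ∧
      TwoDivisible H.carrier :=
  ⟨hu.toUnitalLGroup, id, Function.injective_id, fun _ _ => rfl, fun _ _ => rfl,
    fun _ _ => rfl, rfl, (hr.twoDivisible hu hs : TwoDivisible G)⟩

/-- a representable pseudo MV-algebra `M = Γ(G,u)` with a strict square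
root yields an embedding of `(G,u)` into a two-divisible unital ℓ-group. -/
theorem stmt_5 {G : Type} [Lattice G] [AddGroup G]
    [CovariantClass G G (· + ·) (· ≤ ·)]
    [CovariantClass G G (Function.swap (· + ·)) (· ≤ ·)]
    (u : G) (hu : IsStrongUnit u) (hrep : IsRepresentable u)
    (r : G → G) (hr : IsSquareRoot u r) (hs : IsStrict u r) :
    ∃ (H : UnitalLGroup) (φ : G → H.carrier),
      Function.Injective φ ∧
      (∀ a b : G, φ (a + b) = φ a + φ b) ∧
      (∀ a b : G, φ (a ⊓ b) = φ a ⊓ φ b) ∧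
      (∀ a b : G, φ (a ⊔ b) = φ a ⊔ φ b) ∧
      φ u = H.u ∧
      TwoDivisible H.carrier :=
  stmt_5_general u hu r hr hs
end

section
/- Let M = Γ(G,u) be an MV-algebra (i.e., G is an abelian lattice-ordered group with strong unit u) possessing a strict square root r. Then G is two-divisible: for every g ∈ G there exists h ∈ G with h + h = g. -/
theorem IsStrict.add_self {G : Type} [Lattice G] [AddGroup G] {u : G} {r : G → G}
    (hs : IsStrict u r) : r 0 + r 0 = u :=
  add_eq_of_eq_sub hs

theorem IsSquareRoot.apply_zero_le_s6 {G : Type} [Lattice G] [AddGroup G] {u : G} {r : G → G}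
    (hr : IsSquareRoot u r) (hu : 0 ≤ u) {x : G} (hx0 : 0 ≤ x) (hxu : x ≤ u) : r 0 ≤ r x := by
  obtain ⟨hr0, hr0u⟩ := hr.1 0 le_rfl hu
  exact hr.2.2.1 x (r 0) hx0 hxu hr0 hr0u (by rw [hr.2.1 0 le_rfl hu]; exact hx0)

section

variable {G : Type} [Lattice G] [AddCommGroup G] [AddLeftMono G]

namespace IsSquareRoot

variable {u : G} {r : G → G}

theorem add_self_sub_eq (hr : IsSquareRoot u r) (hs : IsStrict u r) (hu : 0 ≤ u) {x : G}
    (hx0 : 0 ≤ x) (hxu : x ≤ u) : r x + r x - u = x := by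
  have hle : r 0 ≤ r x := hr.apply_zero_le_s6 hu hx0 hxu
  have hnonneg : 0 ≤ r x + r x - u := sub_nonneg.mpr (hs.add_self ▸ add_le_add hle hle)
  have hsq := hr.2.1 x hx0 hxu
  unfold odot at hsq
  rwa [sub_add_eq_add_sub, sup_eq_left.mpr hnonneg] at hsq

theorem exists_add_self_eq (hr : IsSquareRoot u r) (hs : IsStrict u r) (hu : 0 ≤ u) {x : G}
    (hx0 : 0 ≤ x) (hxu : x ≤ u) : ∃ h, h + h = x :=
  ⟨r x - r 0, by rw [sub_add_sub_comm, hs.add_self, hr.add_self_sub_eq hs hu hx0 hxu]⟩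

end IsSquareRoot

theorem AddSubgroup.mem_of_nonneg_of_le_nsmul {S : AddSubgroup G} {u : G} (hu : 0 ≤ u)
    (hS : Set.Icc 0 u ⊆ S) (n : ℕ) {x : G} (hx0 : 0 ≤ x) (hxn : x ≤ n • u) : x ∈ S := by
  induction n generalizing x with
  | zero => rw [le_antisymm (zero_nsmul u ▸ hxn) hx0]; exact S.zero_mem
  | succ k ih =>
    have hrest : x - x ⊓ u ∈ S := by
      refine ih (sub_nonneg.mpr inf_le_left) ?_
      rw [sub_inf, sub_self]
      exact sup_le (nsmul_nonneg hu k) (sub_le_iff_le_add.mpr (succ_nsmul u k ▸ hxn))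
    simpa using S.add_mem (hS ⟨le_inf hx0 hu, inf_le_right⟩) hrest

theorem AddSubgroup.eq_top_of_Icc_subset {S : AddSubgroup G} {u : G} (hu : IsStrongUnit u)
    (hS : Set.Icc 0 u ⊆ S) : S = ⊤ := by
  obtain ⟨hu0, hbound⟩ := hu
  refine (AddSubgroup.eq_top_iff' S).mpr fun g => ?_
  obtain ⟨n, -, hn⟩ := hbound (-g)
  have hshift : 0 ≤ g + n • u := neg_le_iff_add_nonneg'.mp hn
  obtain ⟨m, -, hm⟩ := hbound (g + n • u)
  have hnu : n • u ∈ S := S.nsmul_mem (hS ⟨hu0, le_rfl⟩) n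
  simpa using S.sub_mem (S.mem_of_nonneg_of_le_nsmul hu0 hS m hshift hm) hnu

end

/-- an MV-algebra `M = Γ(G,u)` (`G` abelian) with a strict square root
has a two-divisible `G`. -/
theorem stmt_6 {G : Type} [Lattice G] [AddCommGroup G]
    [CovariantClass G G (· + ·) (· ≤ ·)]
    (u : G) (hu : IsStrongUnit u) (r : G → G)
    (hr : IsSquareRoot u r) (hs : IsStrict u r) :
    TwoDivisible G := by
  have hIcc : Set.Icc 0 u ⊆ (nsmulAddMonoidHom 2 : G →+ G).range := fun x ⟨hx0, hxu⟩ => by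
    obtain ⟨h, hh⟩ := hr.exists_add_self_eq hs hu.1 hx0 hxu
    exact ⟨h, by simpa [two_nsmul] using hh⟩
  intro g
  obtain ⟨h, hh⟩ := AddSubgroup.eq_top_of_Icc_subset hu hIcc ▸ AddSubgroup.mem_top g
  exact ⟨h, by simpa [two_nsmul] using hh⟩
end

section
/- Let M = Γ(G,u) be a representable pseudo MV-algebra with a square root r. If the lattice-ordered group G is two-divisible (every g ∈ G equals h + h for some h ∈ G), then r is strict, i.e., r(0) = u − r(0). -/
/-! Since `r 0 ⊙ r 0 = 0`, (Sq1) and (Sq2) make `r 0` the largest `y ∈ [0, u]` with `y + y ≤ u`.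
Halving `u = h + h` gives such an `h` (it is nonnegative because `0 ≤ 2 • h` forces `0 ≤ h` in an
ℓ-group), hence `u = h + h ≤ r 0 + r 0 ≤ u`. -/

section SquareRoot

variable {G : Type} [Lattice G] [AddGroup G] [AddLeftMono G] [AddRightMono G]

lemma odot_self_eq_zero_iff (u y : G) : odot u y y = 0 ↔ y + y ≤ u := by
  calc odot u y y = 0 ↔ y + (-u + y) ≤ 0 := by
        rw [odot, sup_eq_right, sub_eq_add_neg, add_assoc]
    _ ↔ -u + y ≤ -y := by rw [← le_neg_add_iff_add_le, add_zero]
    _ ↔ y + y ≤ u := by rw [neg_add_le_iff_le_add, ← le_sub_iff_add_le, sub_eq_add_neg]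

variable {u : G} {r : G → G}

lemma IsSquareRoot.apply_zero_add_self_le (hr : IsSquareRoot u r) (hu : 0 ≤ u) :
    r 0 + r 0 ≤ u :=
  (odot_self_eq_zero_iff u (r 0)).mp (hr.2.1 0 le_rfl hu)

lemma IsSquareRoot.le_apply_zero (hr : IsSquareRoot u r) (hu : 0 ≤ u) {y : G} (hy : 0 ≤ y)
    (hyy : y + y ≤ u) : y ≤ r 0 := by
  have hyu : y ≤ u := le_trans (le_add_of_nonneg_left hy) hyy
  exact hr.2.2.1 0 y le_rfl hu hy hyu ((odot_self_eq_zero_iff u y).mpr hyy).le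

end SquareRoot

theorem stmt_8_general {G : Type} [Lattice G] [AddGroup G]
    [CovariantClass G G (· + ·) (· ≤ ·)]
    [CovariantClass G G (Function.swap (· + ·)) (· ≤ ·)]
    (u : G) (hu : IsStrongUnit u)
    (r : G → G) (hr : IsSquareRoot u r)
    (hdiv : TwoDivisible G) :
    r 0 = u - r 0 := by
  obtain ⟨h, rfl⟩ := hdiv u
  have hh : 0 ≤ h := nsmul_two_semiclosed (by rw [two_nsmul]; exact hu.1)
  have hhr : h ≤ r 0 := hr.le_apply_zero hu.1 hh le_rfl
  refine eq_sub_iff_add_eq.mpr (le_antisymm (hr.apply_zero_add_self_le hu.1) ?_)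
  exact add_le_add hhr hhr

/-- if a representable pseudo MV-algebra `M = Γ(G,u)` has a square root `r`
and `G` is two-divisible, then `r` is strict, i.e. `r 0 = u - r 0`. -/
theorem stmt_8 {G : Type} [Lattice G] [AddGroup G]
    [CovariantClass G G (· + ·) (· ≤ ·)]
    [CovariantClass G G (Function.swap (· + ·)) (· ≤ ·)]
    (u : G) (hu : IsStrongUnit u) (hrep : IsRepresentable u)
    (r : G → G) (hr : IsSquareRoot u r)
    (hdiv : TwoDivisible G) :
    r 0 = u - r 0 :=
  stmt_8_general u hu r hr hdiv
end
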